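/- arXiv:2203.05474 — 9 statements merged into one kernel-verified Lean document; each statement's English description precedes it below -/
import Mathlib

section
/- Let V be a finite-dimensional complex inner product space and θ an antiunitary map on V with θ² = -I. Then the dimension of V is even. -/
open InnerProductSpace

/-- If a finite-dimensional complex inner product space `V` admits an
antiunitary map `θ` (additive, conjugate-linear, bijective, inner-product conjugating)
with `θ² = -I`, then `dim V` is even. -/
theorem even_finrank_of_antiunitary_sq_neg_one
    {V : Type*} [NormedAddCommGroup V] [InnerProductSpace ℂ V] [FiniteDimensional ℂ V]
    (θ : V → V)
    (h_add : ∀ x y : V, θ (x + y) = θ x + θ y)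
    (h_smul : ∀ (c : ℂ) (x : V), θ (c • x) = (starRingEnd ℂ c) • θ x)
    (h_bij : Function.Bijective θ)
    (h_inner : ∀ x y : V, ⟪θ x, θ y⟫_ℂ = starRingEnd ℂ ⟪x, y⟫_ℂ)
    (h_sq : ∀ x : V, θ (θ x) = -x) :
    Even (Module.finrank ℂ V) := by
  classical
  have hθ0 : θ 0 = 0 := by
    have h := h_add 0 0
    rw [add_zero] at h
    exact left_eq_add.mp h
  -- components of a quaternion as two complex numbers: q = c1 q + c2 q * j
  set c1 : Quaternion ℝ → ℂ := fun q => ⟨q.re, q.imI⟩ with hc1def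
  set c2 : Quaternion ℝ → ℂ := fun q => ⟨q.imJ, q.imK⟩ with hc2def
  have hc1mul : ∀ q p : Quaternion ℝ,
      c1 (q * p) = c1 q * c1 p - c2 q * (starRingEnd ℂ) (c2 p) := by
    intro q p
    apply Complex.ext <;>
      simp [hc1def, hc2def, Complex.ext_iff, Quaternion.re_mul, Quaternion.imI_mul] <;> ring
  have hc2mul : ∀ q p : Quaternion ℝ,
      c2 (q * p) = c1 q * c2 p + c2 q * (starRingEnd ℂ) (c1 p) := by
    intro q p
    apply Complex.ext <;>
      simp [hc1def, hc2def, Complex.ext_iff, Quaternion.imJ_mul, Quaternion.imK_mul] <;> ring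
  letI : SMul (Quaternion ℝ) V := ⟨fun q v => c1 q • v + c2 q • θ v⟩
  have hsmul_def : ∀ (q : Quaternion ℝ) (v : V), q • v = c1 q • v + c2 q • θ v :=
    fun _ _ => rfl
  letI : Module (Quaternion ℝ) V :=
    { smul := fun q v => c1 q • v + c2 q • θ v
      one_smul := by
        intro v
        rw [hsmul_def]
        have h1 : c1 1 = 1 := by apply Complex.ext <;> simp [hc1def, Quaternion.re_one, Quaternion.imI_one]
        have h2 : c2 1 = 0 := by apply Complex.ext <;> simp [hc2def, Quaternion.imJ_one, Quaternion.imK_one]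
        simp [h1, h2]
      mul_smul := by
        intro q p v
        rw [hsmul_def, hsmul_def, hsmul_def, h_add, h_smul, h_smul, h_sq, hc1mul, hc2mul]
        simp only [smul_add, smul_smul, smul_neg, sub_smul, add_smul]
        module
      smul_zero := by
        intro q
        rw [hsmul_def, hθ0]
        simp
      smul_add := by
        intro q v w
        rw [hsmul_def, hsmul_def, hsmul_def, h_add]
        simp only [smul_add]
        abel
      add_smul := by
        intro q p v
        have h1 : c1 (q + p) = c1 q + c1 p := by
          apply Complex.ext <;> simp [hc1def]
        have h2 : c2 (q + p) = c2 q + c2 p := by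
          apply Complex.ext <;> simp [hc2def]
        rw [hsmul_def, hsmul_def, hsmul_def, h1, h2]
        simp only [add_smul]
        abel
      zero_smul := by
        intro v
        have h1 : c1 0 = 0 := by apply Complex.ext <;> simp [hc1def, Quaternion.re_zero, Quaternion.imI_zero]
        have h2 : c2 0 = 0 := by apply Complex.ext <;> simp [hc2def, Quaternion.imJ_zero, Quaternion.imK_zero]
        rw [hsmul_def, h1, h2]
        simp }
  haveI : IsScalarTower ℝ (Quaternion ℝ) V := by
    constructor
    intro r q v
    rw [hsmul_def, hsmul_def]
    have h1 : c1 (r • q) = (r : ℂ) * c1 q := by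
      apply Complex.ext <;> simp [hc1def, Quaternion.re_smul, Quaternion.imI_smul]
    have h2 : c2 (r • q) = (r : ℂ) * c2 q := by
      apply Complex.ext <;> simp [hc2def, Quaternion.imJ_smul, Quaternion.imK_smul]
    rw [h1, h2, smul_add]
    rw [← smul_smul, ← smul_smul]
    congr 1 <;> rw [Complex.coe_smul]
  have key : Module.finrank ℝ (Quaternion ℝ) * Module.finrank (Quaternion ℝ) V
      = Module.finrank ℝ V := Module.finrank_mul_finrank ℝ (Quaternion ℝ) V
  have key2 : Module.finrank ℝ ℂ * Module.finrank ℂ V = Module.finrank ℝ V :=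
    Module.finrank_mul_finrank ℝ ℂ V
  rw [Quaternion.finrank_eq_four] at key
  rw [Complex.finrank_real_complex] at key2
  exact ⟨Module.finrank (Quaternion ℝ) V, by omega⟩
end

section
/- Let V be a finite-dimensional complex inner product space and θ an antiunitary map with θ² = -I. Then V admits an orthonormal basis {φ₁, φ₁', ..., φₙ, φₙ'} such that θφᵢ = φᵢ' and θφᵢ' = -φᵢ for all i. -/
open InnerProductSpace Submodule Module

universe u

theorem kramers_aux (k : ℕ) : ∀ (V : Type u) [NormedAddCommGroup V] [InnerProductSpace ℂ V]
    [FiniteDimensional ℂ V] (θ : V → V),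
    (∀ x y : V, θ (x + y) = θ x + θ y) →
    (∀ (c : ℂ) (x : V), θ (c • x) = (starRingEnd ℂ c) • θ x) →
    Function.Bijective θ →
    (∀ x y : V, ⟪θ x, θ y⟫_ℂ = starRingEnd ℂ ⟪x, y⟫_ℂ) →
    (∀ x : V, θ (θ x) = -x) →
    finrank ℂ V = k →
    ∃ (n : ℕ) (b : OrthonormalBasis (Fin n × Fin 2) ℂ V),
      ∀ i : Fin n, θ (b (i, 0)) = b (i, 1) ∧ θ (b (i, 1)) = -b (i, 0) := by
  induction k using Nat.strong_induction_on with
  | _ k IH =>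
    intro V _ _ _ θ h_add h_smul h_bij h_inner h_sq hrank
    rcases Nat.eq_zero_or_pos k with hk | hk
    · -- trivial space
      subst hk
      have : Subsingleton V := (finrank_zero_iff (R := ℂ)).mp hrank
      have horth : Orthonormal ℂ (fun _ : Fin 0 × Fin 2 => (0 : V)) := by
        constructor
        · rintro ⟨⟨_, h⟩, _⟩; omega
        · rintro ⟨⟨_, h⟩, _⟩; omega
      refine ⟨0, OrthonormalBasis.mk horth ?_, fun i => absurd i.2 (by omega)⟩
      intro x _; rw [Subsingleton.elim x 0]; exact Submodule.zero_mem _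
    · -- nontrivial: pick a unit vector
      have : Nontrivial V := by
        rw [← finrank_pos_iff (R := ℂ)]; omega
      obtain ⟨v, hv⟩ := exists_ne (0 : V)
      set φ : V := (‖v‖ : ℂ)⁻¹ • v with hφdef
      have hnφ : ‖φ‖ = 1 := by
        rw [hφdef, norm_smul]
        simp [norm_ne_zero_iff.mpr hv, inv_mul_cancel₀]
      set ψ : V := θ φ with hψdef
      have hnorm_eq : ∀ x : V, ‖θ x‖ = ‖x‖ := by
        intro x
        have h1 : (⟪θ x, θ x⟫_ℂ) = (‖x‖ : ℂ) ^ 2 := by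
          rw [h_inner, inner_self_eq_norm_sq_to_K]; simp
        have h2 : (⟪θ x, θ x⟫_ℂ) = (‖θ x‖ : ℂ) ^ 2 := inner_self_eq_norm_sq_to_K _
        have h3 : (‖x‖ : ℝ) ^ 2 = (‖θ x‖ : ℝ) ^ 2 := by exact_mod_cast h1.symm.trans h2
        nlinarith [norm_nonneg x, norm_nonneg (θ x)]
      have hnψ : ‖ψ‖ = 1 := by rw [hψdef, hnorm_eq, hnφ]
      have hψφ : ⟪ψ, φ⟫_ℂ = 0 := by
        have h1 : ⟪θ φ, θ ψ⟫_ℂ = starRingEnd ℂ ⟪φ, ψ⟫_ℂ := h_inner φ ψ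
        rw [hψdef, h_sq, inner_neg_right, inner_conj_symm] at h1
        rw [← hψdef] at h1
        linear_combination (-(1:ℂ)/2) * h1
      have hφψ : ⟪φ, ψ⟫_ℂ = 0 := by
        rw [← inner_conj_symm, hψφ]; simp
      -- the orthonormal pair
      set f2 : Fin 2 → V := ![φ, ψ] with hf2
      have horth2 : Orthonormal ℂ f2 := by
        constructor
        · intro i; fin_cases i
          · simpa [hf2] using hnφ
          · simpa [hf2] using hnψ
        · intro i j hij
          fin_cases i <;> fin_cases j
          · exact absurd rfl hij
          · simpa [hf2] using hφψ
          · simpa [hf2] using hψφ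
          · exact absurd rfl hij
      set S : Submodule ℂ V := span ℂ (Set.range f2) with hS
      have hφS : φ ∈ S := subset_span ⟨0, by simp [hf2]⟩
      have hψS : ψ ∈ S := subset_span ⟨1, by simp [hf2]⟩
      have hrankS : finrank ℂ S = 2 := by
        rw [hS, finrank_span_eq_card horth2.linearIndependent]; simp
      set W : Submodule ℂ V := Sᗮ with hW
      -- θ maps W into W
      have hθW : ∀ x : V, x ∈ W → θ x ∈ W := by
        intro x hx
        have hxφ : ⟪φ, x⟫_ℂ = 0 := (Submodule.mem_orthogonal S x).mp hx φ hφS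
        have hxψ : ⟪ψ, x⟫_ℂ = 0 := (Submodule.mem_orthogonal S x).mp hx ψ hψS
        rw [hW, Submodule.mem_orthogonal]
        intro u hu
        rw [hS] at hu
        induction hu using Submodule.span_induction with
        | mem u hu =>
          rcases hu with ⟨i, rfl⟩
          fin_cases i
          · have hφeq : φ = -θ ψ := by rw [hψdef, h_sq, neg_neg]
            show ⟪f2 0, θ x⟫_ℂ = 0
            have : f2 0 = φ := by simp [hf2]
            rw [this, hφeq, inner_neg_left, h_inner, hxψ]
            simp
          · show ⟪f2 1, θ x⟫_ℂ = 0
            have : f2 1 = ψ := by simp [hf2]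
            rw [this, hψdef, h_inner, hxφ]
            simp
        | zero => simp
        | add u v _ _ hu hv => rw [inner_add_left, hu, hv, add_zero]
        | smul c u _ hu => rw [inner_smul_left, hu, mul_zero]
      have hneg : ∀ x : V, θ (-x) = -θ x := by
        intro x
        have := h_smul (-1) x
        simpa using this
      -- restricted map
      set θ' : ↥W → ↥W := fun x => ⟨θ ↑x, hθW ↑x x.2⟩ with hθ'def
      have hθ'coe : ∀ x : ↥W, (θ' x : V) = θ ↑x := fun x => rfl
      have h_add' : ∀ x y : ↥W, θ' (x + y) = θ' x + θ' y := by
        intro x y; apply Subtype.ext; simp [hθ'coe, h_add]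
      have h_smul' : ∀ (c : ℂ) (x : ↥W), θ' (c • x) = (starRingEnd ℂ c) • θ' x := by
        intro c x; apply Subtype.ext; simp [hθ'coe, h_smul]
      have h_sq' : ∀ x : ↥W, θ' (θ' x) = -x := by
        intro x; apply Subtype.ext; simp [hθ'coe, h_sq]
      have h_bij' : Function.Bijective θ' := by
        constructor
        · intro a b hab
          apply Subtype.ext
          exact h_bij.1 (congrArg (Subtype.val) hab)
        · intro y
          refine ⟨⟨-θ ↑y, Submodule.neg_mem _ (hθW _ y.2)⟩, ?_⟩
          apply Subtype.ext
          simp [hθ'coe, hneg, h_sq]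
      have h_inner' : ∀ x y : ↥W, ⟪θ' x, θ' y⟫_ℂ = starRingEnd ℂ ⟪x, y⟫_ℂ := by
        intro x y
        rw [Submodule.coe_inner, Submodule.coe_inner, hθ'coe, hθ'coe, h_inner]
      -- dimension count
      have hdim : finrank ℂ S + finrank ℂ W = k := by
        rw [← hrank, hW]; exact Submodule.finrank_add_finrank_orthogonal S
      have hlt : finrank ℂ W < k := by omega
      obtain ⟨m, b', hb'⟩ := IH (finrank ℂ W) hlt ↥W θ' h_add' h_smul' h_bij' h_inner' h_sq' rfl
      -- assemble the full family
      set f : Fin (m + 1) × Fin 2 → V :=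
        fun p => Fin.cases (f2 p.2) (fun j => ((b' (j, p.2) : V))) p.1 with hfdef
      have hf0 : ∀ c : Fin 2, f (0, c) = f2 c := by intro c; simp [hfdef]
      have hfs : ∀ (j : Fin m) (c : Fin 2), f (j.succ, c) = (b' (j, c) : V) := by
        intro j c; simp [hfdef]
      have hbS : ∀ p : Fin m × Fin 2, (b' p : V) ∈ W := fun p => (b' p).2
      have hinnSW : ∀ (c : Fin 2) (p : Fin m × Fin 2), ⟪f2 c, (b' p : V)⟫_ℂ = 0 := by
        intro c p
        exact (Submodule.mem_orthogonal S _).mp (hbS p) (f2 c) (subset_span ⟨c, rfl⟩)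
      have horthf : Orthonormal ℂ f := by
        constructor
        · rintro ⟨i, c⟩
          induction i using Fin.cases with
          | zero => rw [hf0]; exact horth2.1 c
          | succ j =>
            rw [hfs]
            have := b'.orthonormal.1 (j, c)
            rwa [← Submodule.norm_coe] at this
        · rintro ⟨i, c⟩ ⟨j, d⟩ hpq
          induction i using Fin.cases with
          | zero =>
            induction j using Fin.cases with
            | zero =>
              rw [hf0, hf0]
              exact horth2.2 (fun h => hpq (by rw [h]))
            | succ j' => rw [hf0, hfs]; exact hinnSW c (j', d)
          | succ i' =>
            induction j using Fin.cases with
            | zero =>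
              rw [hf0, hfs, ← inner_conj_symm, hinnSW d (i', c)]
              simp
            | succ j' =>
              rw [hfs, hfs]
              have hne : (i', c) ≠ (j', d) := by
                intro h
                apply hpq
                rw [Prod.ext_iff] at h ⊢
                exact ⟨congrArg Fin.succ h.1, h.2⟩
              rw [← Submodule.coe_inner]
              exact b'.orthonormal.2 hne
      have hspan : ⊤ ≤ span ℂ (Set.range f) := by
        rw [← Submodule.sup_orthogonal_of_hasOrthogonalProjection (K := S), ← hW]
        apply sup_le
        · rw [hS]
          apply span_le.2
          rintro _ ⟨c, rfl⟩
          exact subset_span ⟨(0, c), hf0 c⟩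
        · intro x hx
          have h1 : x ∈ Submodule.map W.subtype (span ℂ (Set.range ⇑b'.toBasis)) :=
            ⟨⟨x, hx⟩, by rw [b'.toBasis.span_eq]; trivial, rfl⟩
          rw [Submodule.map_span] at h1
          refine span_mono ?_ h1
          rintro _ ⟨_, ⟨⟨j, c⟩, rfl⟩, rfl⟩
          exact ⟨(j.succ, c), by rw [hfs]; simp⟩
      refine ⟨m + 1, OrthonormalBasis.mk horthf hspan, ?_⟩
      intro i
      simp only [OrthonormalBasis.coe_mk]
      induction i using Fin.cases with
      | zero =>
        rw [hf0, hf0]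
        constructor
        · show θ (f2 0) = f2 1
          simp [hf2, hψdef]
        · show θ (f2 1) = -(f2 0)
          simp only [hf2]
          simp only [Matrix.cons_val_one, Matrix.head_cons, Matrix.cons_val_zero]
          rw [hψdef, h_sq]
      | succ j =>
        rw [hfs, hfs]
        have h1 := (hb' j).1
        have h2 := (hb' j).2
        constructor
        · rw [← hθ'coe, h1]
        · rw [← hθ'coe, h2]
          simp


/-- For an antiunitary `θ` with `θ² = -I` on a finite-dimensional complex
inner product space `V`, there is an orthonormal basis `{φ₁, φ₁', …, φₙ, φₙ'}` (indexed by
`Fin n × Fin 2`) with `θ φᵢ = φᵢ'` and `θ φᵢ' = -φᵢ`. -/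
theorem antiunitary_kramers_basis
    {V : Type*} [NormedAddCommGroup V] [InnerProductSpace ℂ V] [FiniteDimensional ℂ V]
    (θ : V → V)
    (h_add : ∀ x y : V, θ (x + y) = θ x + θ y)
    (h_smul : ∀ (c : ℂ) (x : V), θ (c • x) = (starRingEnd ℂ c) • θ x)
    (h_bij : Function.Bijective θ)
    (h_inner : ∀ x y : V, ⟪θ x, θ y⟫_ℂ = starRingEnd ℂ ⟪x, y⟫_ℂ)
    (h_sq : ∀ x : V, θ (θ x) = -x) :
    ∃ (n : ℕ) (b : OrthonormalBasis (Fin n × Fin 2) ℂ V),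
      ∀ i : Fin n, θ (b (i, 0)) = b (i, 1) ∧ θ (b (i, 1)) = -b (i, 0) :=
  kramers_aux (Module.finrank ℂ V) V θ h_add h_smul h_bij h_inner h_sq rfl
end

section
/- Let P, Q be orthogonal projections on a Hilbert space H, A = Q - P, B = I - P - Q. If φ is an eigenvector of A with eigenvalue λ ∉ {-1, 0, 1}, then Bφ is a nonzero eigenvector of A with eigenvalue -λ. -/
/-- For orthogonal projections `P, Q` with `A = Q - P`, `B = I - P - Q`:
if `φ` is an eigenvector of `A` with eigenvalue `λ ∉ {-1, 0, 1}`, then `Bφ` is a nonzero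
eigenvector of `A` with eigenvalue `-λ`. -/
theorem spectral_symmetry_eigenvector
    {H : Type*} [NormedAddCommGroup H] [InnerProductSpace ℂ H] [CompleteSpace H]
    (P Q : H →L[ℂ] H)
    (hP_idem : P * P = P) (hP_sa : IsSelfAdjoint P)
    (hQ_idem : Q * Q = Q) (hQ_sa : IsSelfAdjoint Q)
    (A B : H →L[ℂ] H) (hA : A = Q - P) (hB : B = 1 - P - Q)
    (lam : ℂ) (hlam : lam ∉ ({-1, 0, 1} : Set ℂ))
    (φ : H) (hφ : φ ≠ 0) (heig : A φ = lam • φ) :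
    B φ ≠ 0 ∧ A (B φ) = (-lam) • B φ := by
  have hanti : A * B = -(B * A) := by
    subst hA hB
    have h1 := hP_idem
    have h2 := hQ_idem
    noncomm_ring
    rw [h1, h2]
    abel
  have hBB : B * B = 1 - A * A := by
    subst hA hB
    noncomm_ring
    rw [hP_idem, hQ_idem]
    abel
  have heig2 : A (B φ) = (-lam) • B φ := by
    have : (A * B) φ = (-(B * A)) φ := by rw [hanti]
    simpa [ContinuousLinearMap.mul_apply, heig, map_smul, neg_smul] using this
  refine ⟨?_, heig2⟩
  intro h0
  have hBBφ : B (B φ) = (1 - lam ^ 2) • φ := by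
    have : (B * B) φ = (1 - A * A) φ := by rw [hBB]
    simpa [ContinuousLinearMap.mul_apply, heig, map_smul, smul_smul, sub_smul, sq] using this
  rw [h0, map_zero] at hBBφ
  have hl2 : (1 - lam ^ 2) ≠ 0 := by
    simp only [Set.mem_insert_iff, Set.mem_singleton_iff, not_or] at hlam
    intro h
    have h2 : lam * lam = 1 := by linear_combination -h
    rcases mul_self_eq_one_iff.mp h2 with h1 | h1
    · exact hlam.2.2 h1
    · exact hlam.1 h1
  exact hφ ((smul_eq_zero.mp hBBφ.symm).resolve_left hl2)
end

section
/- Let P, Q be orthogonal projections on a Hilbert space H with A = Q - P compact, and B = I - P - Q. For λ ∉ {-1, 0, 1} an eigenvalue of A, the operator B restricts to a linear isomorphism from the eigenspace ker(A - λ) onto the eigenspace ker(A + λ); in particular these eigenspaces have equal (finite) dimension. -/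
theorem finiteDim_eigenspace_of_compact
    {H : Type*} [NormedAddCommGroup H] [InnerProductSpace ℂ H] [CompleteSpace H]
    (A : H →L[ℂ] H) (hA : IsCompactOperator A) (μ : ℂ) (hμ : μ ≠ 0) :
    FiniteDimensional ℂ (Module.End.eigenspace (↑A : H →ₗ[ℂ] H) μ) := by
  set E := Module.End.eigenspace (↑A : H →ₗ[ℂ] H) μ with hE
  have hmemE : ∀ x, x ∈ E ↔ A x = μ • x := by
    intro x; rw [hE, Module.End.mem_eigenspace_iff]; rfl
  have hclosed : IsClosed (E : Set H) := by
    have : (E : Set H) = (fun x => A x - μ • x) ⁻¹' {0} := by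
      ext x; simp [hmemE, sub_eq_zero]
    rw [this]
    exact IsClosed.preimage (A.continuous.sub (continuous_const_smul μ)) isClosed_singleton
  have hV : ∀ v ∈ E, (↑A : H →ₗ[ℂ] H) v ∈ E := by
    intro v hv
    rw [hmemE] at hv ⊢
    show A (A v) = μ • A v
    rw [hv, map_smul, hv]
  have hres : IsCompactOperator ((↑A : H →ₗ[ℂ] H).restrict hV) :=
    (IsCompactOperator.comp_clm hA E.subtypeL).codRestrict
      (fun x => hV x x.2) hclosed
  have hid : IsCompactOperator (LinearMap.id (R := ℂ) (M := E)) := by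
    have heq : μ⁻¹ • ((↑A : H →ₗ[ℂ] H).restrict hV) = LinearMap.id := by
      ext v
      have := (hmemE v).mp v.2
      show μ⁻¹ • ((↑A : H →ₗ[ℂ] H).restrict hV v : H) = (v : H)
      rw [show (((↑A : H →ₗ[ℂ] H).restrict hV) v : H) = A v from rfl, this,
        smul_smul, inv_mul_cancel₀ hμ, one_smul]
    rw [← heq]
    exact hres.smul μ⁻¹
  have hball := hid.image_closedBall_subset_compact 1
  obtain ⟨K, hK, hsub⟩ := hball
  simp only [LinearMap.id_coe, Set.image_id] at hsub
  have : IsCompact (Metric.closedBall (0 : E) 1) :=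
    hK.of_isClosed_subset Metric.isClosed_closedBall hsub
  exact FiniteDimensional.of_isCompact_closedBall₀ (𝕜 := ℂ) one_pos this

/-- For orthogonal projections `P, Q` with `A = Q - P` compact and
`B = I - P - Q`: for every eigenvalue `λ ∉ {-1, 0, 1}` of `A`, the operator `B` restricts
to a linear isomorphism from the eigenspace of `A` at `λ` onto the eigenspace at `-λ`;
in particular these eigenspaces are finite dimensional of equal dimension. -/
theorem B_maps_eigenspaces_isomorphically
    {H : Type*} [NormedAddCommGroup H] [InnerProductSpace ℂ H] [CompleteSpace H]
    (P Q : H →L[ℂ] H)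
    (hP_idem : P * P = P) (hP_sa : IsSelfAdjoint P)
    (hQ_idem : Q * Q = Q) (hQ_sa : IsSelfAdjoint Q)
    (A B : H →L[ℂ] H) (hA : A = Q - P) (hB : B = 1 - P - Q)
    (hA_compact : IsCompactOperator A)
    (lam : ℂ) (hlam : lam ∉ ({-1, 0, 1} : Set ℂ))
    (heig : Module.End.HasEigenvalue (↑A : H →ₗ[ℂ] H) lam) :
    ∃ e : Module.End.eigenspace (↑A : H →ₗ[ℂ] H) lam ≃ₗ[ℂ]
        Module.End.eigenspace (↑A : H →ₗ[ℂ] H) (-lam),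
      (∀ v : Module.End.eigenspace (↑A : H →ₗ[ℂ] H) lam, (e v : H) = B v) ∧
      FiniteDimensional ℂ (Module.End.eigenspace (↑A : H →ₗ[ℂ] H) lam) ∧
      FiniteDimensional ℂ (Module.End.eigenspace (↑A : H →ₗ[ℂ] H) (-lam)) ∧
      Module.finrank ℂ (Module.End.eigenspace (↑A : H →ₗ[ℂ] H) lam) =
        Module.finrank ℂ (Module.End.eigenspace (↑A : H →ₗ[ℂ] H) (-lam)) := by
  simp only [Set.mem_insert_iff, Set.mem_singleton_iff, not_or] at hlam
  obtain ⟨hlam1, hlam0, hlam1'⟩ := hlam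
  have hfac : 1 - lam ^ 2 ≠ 0 := by
    intro h
    have : (1 - lam) * (1 + lam) = 0 := by ring_nf; linear_combination h
    rcases mul_eq_zero.mp this with h' | h'
    · exact hlam1' (by linear_combination -h')
    · exact hlam1 (by linear_combination h')
  -- anticommutation A*B = -(B*A)
  have hanti : A * B = -(B * A) := by
    subst hA hB
    simp only [mul_sub, sub_mul, mul_one, one_mul, hP_idem, hQ_idem]
    noncomm_ring
  -- A^2 + B^2 = 1
  have hsq : A * A + B * B = 1 := by
    subst hA hB
    simp only [mul_sub, sub_mul, mul_one, one_mul, hP_idem, hQ_idem]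
    noncomm_ring
  have hmem : ∀ (μ : ℂ) (x : H), x ∈ Module.End.eigenspace (↑A : H →ₗ[ℂ] H) μ ↔ A x = μ • x := by
    intro μ x; rw [Module.End.mem_eigenspace_iff]; rfl
  -- B maps eigenspace μ into eigenspace (-μ)
  have hmap : ∀ (μ : ℂ) (x : H), A x = μ • x → A (B x) = (-μ) • B x := by
    intro μ x hx
    have h1 : (A * B) x = -((B * A) x) := by rw [hanti]; rfl
    have : A (B x) = -(B (A x)) := h1
    rw [this, hx, map_smul, neg_smul]
  -- B ∘ B acts as (1 - μ^2) on eigenspace μ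
  have hBB : ∀ (μ : ℂ) (x : H), A x = μ • x → B (B x) = (1 - μ ^ 2) • x := by
    intro μ x hx
    have h1 : (A * A) x + (B * B) x = x := by
      have := congrArg (fun T : H →L[ℂ] H => T x) hsq
      simpa using this
    have h2 : (A * A) x = (μ ^ 2) • x := by
      show A (A x) = (μ ^ 2) • x
      rw [hx, map_smul, hx, smul_smul, sq]
    have h3 : (B * B) x = x - (μ ^ 2) • x := by
      rw [h2] at h1; exact eq_sub_of_add_eq' h1
    show B (B x) = (1 - μ ^ 2) • x
    calc B (B x) = (B * B) x := rfl
    _ = x - (μ ^ 2) • x := h3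
    _ = (1 - μ ^ 2) • x := by rw [sub_smul, one_smul]
  set Ep := Module.End.eigenspace (↑A : H →ₗ[ℂ] H) lam
  set Em := Module.End.eigenspace (↑A : H →ₗ[ℂ] H) (-lam)
  have hfac' : 1 - (-lam) ^ 2 = 1 - lam ^ 2 := by ring
  -- forward and backward maps
  let f : Ep →ₗ[ℂ] Em :=
    { toFun := fun v => ⟨B v, (hmem _ _).mpr (hmap lam v ((hmem _ _).mp v.2))⟩
      map_add' := fun v w => by ext; simp
      map_smul' := fun c v => by ext; simp }
  let g0 : Em →ₗ[ℂ] Ep :=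
    { toFun := fun w => ⟨B w, (hmem _ _).mpr (by
        have := hmap (-lam) w ((hmem _ _).mp w.2)
        rwa [neg_neg] at this)⟩
      map_add' := fun v w => by ext; simp
      map_smul' := fun c v => by ext; simp }
  let g : Em →ₗ[ℂ] Ep := (1 - lam ^ 2)⁻¹ • g0
  have hgf : g ∘ₗ f = LinearMap.id := by
    ext v
    show (1 - lam ^ 2)⁻¹ • B (B (v : H)) = (v : H)
    rw [hBB lam v ((hmem _ _).mp v.2), smul_smul, inv_mul_cancel₀ hfac, one_smul]
  have hfg : f ∘ₗ g = LinearMap.id := by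
    ext w
    show B ((1 - lam ^ 2)⁻¹ • B (w : H)) = (w : H)
    have := hBB (-lam) w ((hmem _ _).mp w.2)
    rw [map_smul, this, hfac', smul_smul, inv_mul_cancel₀ hfac, one_smul]
  let e : Ep ≃ₗ[ℂ] Em := LinearEquiv.ofLinear f g hfg hgf
  have hEp : FiniteDimensional ℂ Ep := finiteDim_eigenspace_of_compact A hA_compact lam hlam0
  have hEm : FiniteDimensional ℂ Em :=
    finiteDim_eigenspace_of_compact A hA_compact (-lam) (neg_ne_zero.mpr hlam0)
  exact ⟨e, fun v => rfl, hEp, hEm, e.finrank_eq⟩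
end

section
/- Let U be unitary, P a projection, τ antiunitary with τ² = -I, τUτ* = U*, τPτ* = P. Set Q = UPU*, A = Q - P, B = I - P - Q, τ̃ = Uτ. Then τ̃Bτ̃* = B and τ̃Aτ̃* = -A, and consequently τ̃ maps ker(A - λ) bijectively onto ker(A + λ) for every real λ. -/
open InnerProductSpace ContinuousLinearMap

/-- With `U` unitary, `P` a projection, `τ` antiunitary with `τ² = -I`,
`τUτ* = U*`, `τPτ* = P`, and `Q = UPU*`, `A = Q - P`, `B = I - P - Q`, `τ̃ = Uτ`:
`τ̃Bτ̃* = B`, `τ̃Aτ̃* = -A`, and `τ̃` maps the `λ`-eigenspace of `A` bijectively onto the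
`(-λ)`-eigenspace, for every real `λ`. -/
theorem tilde_tau_anticommutes_with_A
    {H : Type*} [NormedAddCommGroup H] [InnerProductSpace ℂ H] [CompleteSpace H]
    (U : H →L[ℂ] H) (hU₁ : adjoint U * U = 1) (hU₂ : U * adjoint U = 1)
    (P : H →L[ℂ] H) (hP_idem : P * P = P) (hP_sa : IsSelfAdjoint P)
    (τ : H → H)
    (hτ_add : ∀ x y : H, τ (x + y) = τ x + τ y)
    (hτ_smul : ∀ (c : ℂ) (x : H), τ (c • x) = (starRingEnd ℂ c) • τ x)
    (hτ_bij : Function.Bijective τ)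
    (hτ_inner : ∀ x y : H, ⟪τ x, τ y⟫_ℂ = starRingEnd ℂ ⟪x, y⟫_ℂ)
    (hτ_sq : ∀ x : H, τ (τ x) = -x)
    (hτU : ∀ x : H, τ (U x) = adjoint U (τ x))
    (hτP : ∀ x : H, τ (P x) = P (τ x))
    (Q A B : H →L[ℂ] H) (hQ : Q = U * P * adjoint U)
    (hA : A = Q - P) (hB : B = 1 - P - Q) :
    (∀ x : H, U (τ (B x)) = B (U (τ x))) ∧
    (∀ x : H, U (τ (A x)) = -A (U (τ x))) ∧
    (∀ lam : ℝ, Set.BijOn (fun x : H => U (τ x))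
      {x : H | A x = (lam : ℂ) • x} {x : H | A x = (-(lam : ℂ)) • x}) := by

  have hUU : ∀ x : H, U (adjoint U x) = x := fun x => by
    have := congrArg (fun T : H →L[ℂ] H => T x) hU₂
    simpa [ContinuousLinearMap.mul_apply] using this
  have hUU' : ∀ x : H, adjoint U (U x) = x := fun x => by
    have := congrArg (fun T : H →L[ℂ] H => T x) hU₁
    simpa [ContinuousLinearMap.mul_apply] using this
  have hτ_neg : ∀ x : H, τ (-x) = -τ x := fun x => by
    have := hτ_smul (-1) x
    simpa using this
  have hτ_sub : ∀ x y : H, τ (x - y) = τ x - τ y := fun x y => by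
    rw [sub_eq_add_neg, hτ_add, hτ_neg, sub_eq_add_neg]
  have hτU' : ∀ x : H, τ (adjoint U x) = U (τ x) := fun x => by
    have h := hτU (adjoint U x)
    rw [hUU] at h
    have := congrArg U h
    rw [hUU] at this
    exact this.symm
  have hfP : ∀ x : H, U (τ (P x)) = Q (U (τ x)) := fun x => by
    rw [hτP, hQ]
    simp only [ContinuousLinearMap.mul_apply, hUU']
  have hfQ : ∀ x : H, U (τ (Q x)) = P (U (τ x)) := fun x => by
    rw [hQ]
    simp only [ContinuousLinearMap.mul_apply]
    rw [hτU, hUU, hτP, hτU']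
  have hfB : ∀ x : H, U (τ (B x)) = B (U (τ x)) := fun x => by
    rw [hB]
    simp only [ContinuousLinearMap.sub_apply, ContinuousLinearMap.one_apply]
    rw [hτ_sub, hτ_sub, map_sub, map_sub, hfP, hfQ]
    abel
  have hfA : ∀ x : H, U (τ (A x)) = -A (U (τ x)) := fun x => by
    rw [hA]
    simp only [ContinuousLinearMap.sub_apply]
    rw [hτ_sub, map_sub, hfP, hfQ]
    abel
  refine ⟨hfB, hfA, fun lam => ?_⟩
  have hff : ∀ x : H, U (τ (U (τ x))) = -x := fun x => by
    rw [hτU, hUU, hτ_sq]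
  have hfneg : ∀ x : H, U (τ (-x)) = -U (τ x) := fun x => by
    rw [hτ_neg, map_neg]
  have hfsmul : ∀ (r : ℝ) (x : H), U (τ ((r : ℂ) • x)) = (r : ℂ) • U (τ x) := fun r x => by
    rw [hτ_smul, Complex.conj_ofReal, map_smul]
  refine ⟨fun x hx => ?_, fun x _ y _ hxy => ?_, fun y hy => ?_⟩
  · simp only [Set.mem_setOf_eq] at hx ⊢
    have := hfA x
    rw [hx, hfsmul] at this
    calc A (U (τ x)) = -((lam : ℂ) • U (τ x)) := by
          rw [← neg_neg (A (U (τ x))), ← this]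
        _ = (-(lam : ℂ)) • U (τ x) := by rw [neg_smul]
  · have h1 := hff x
    have h2 := hff y
    simp only at hxy
    rw [hxy] at h1
    rw [h2] at h1
    exact (neg_injective h1).symm
  · simp only [Set.mem_setOf_eq] at hy
    refine ⟨-(U (τ y)), ?_, ?_⟩
    · have h := hfA y
      rw [hy, neg_smul, hfneg, hfsmul] at h
      simp only [Set.mem_setOf_eq, map_neg, smul_neg]
      exact h.symm
    · simp only
      rw [hfneg, hff, neg_neg]
end

section
/- Let U be unitary, P a projection with A = UPU* - P compact, and τ antiunitary with τ² = -I, τUτ* = U*, τPτ* = P. Then for every eigenvalue λ of A with λ ∉ {-1, 0, 1}, the eigenspace ker(A - λ) has even dimension. -/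
open InnerProductSpace ContinuousLinearMap
universe u

theorem aux_even_quaternionic :
    ∀ (n : ℕ) (E : Type u) [NormedAddCommGroup E] [InnerProductSpace ℂ E]
      [FiniteDimensional ℂ E] (J : E → E) (r : ℝ),
      Module.finrank ℂ E = n → 0 < r →
      (∀ x y : E, J (x + y) = J x + J y) →
      (∀ (c : ℂ) (x : E), J (c • x) = (starRingEnd ℂ c) • J x) →
      (∀ x y : E, ⟪J x, J y⟫_ℂ = (r : ℂ) * (starRingEnd ℂ) ⟪x, y⟫_ℂ) →
      (∀ x : E, J (J x) = (-(r : ℂ)) • x) → Even n := by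
  intro n
  induction n using Nat.strong_induction_on with
  | _ n ih =>
  intro E _ _ _ J r hrank hr hadd hsmul hinner hsq
  rcases Nat.eq_zero_or_pos n with hn | hn
  · simp [hn]
  have hnt : Nontrivial E := by
    rw [← hrank] at hn
    exact Module.finrank_pos_iff.mp hn
  obtain ⟨x, hx⟩ := exists_ne (0 : E)
  have hrC : (-(r : ℂ)) ≠ 0 := by
    simpa using (ne_of_gt hr)
  have hli : LinearIndependent ℂ ![x, J x] := by
    rw [LinearIndependent.pair_iff' hx]
    intro a ha
    have h1 : (starRingEnd ℂ a) • J x = (-(r : ℂ)) • x := by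
      rw [← hsq, ← hsmul, ha]
    rw [← ha, smul_smul] at h1
    have h2 : (starRingEnd ℂ a * a + (r : ℂ)) • x = 0 := by
      rw [add_smul, h1]
      simp
    have h3 : starRingEnd ℂ a * a + (r : ℂ) = 0 := by
      by_contra h
      exact hx (by simpa [h] using smul_eq_zero.mp h2)
    have h4 : (Complex.normSq a + r : ℂ) = 0 := by
      rw [← h3, Complex.normSq_eq_conj_mul_self]
    have h5 : (Complex.normSq a + r : ℝ) = 0 := by exact_mod_cast h4
    nlinarith [Complex.normSq_nonneg a]
  set W := Submodule.span ℂ (Set.range ![x, J x]) with hW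
  have hxW : x ∈ W := Submodule.subset_span ⟨0, rfl⟩
  have hJxW : J x ∈ W := Submodule.subset_span ⟨1, rfl⟩
  have hWrank : Module.finrank ℂ W = 2 := by
    rw [finrank_span_eq_card hli]
    simp
  have hperp : ∀ y : E, y ∈ Wᗮ → J y ∈ Wᗮ := by
    intro y hy
    have hJxy : ⟪J x, y⟫_ℂ = 0 := (Submodule.mem_orthogonal W y).mp hy _ hJxW
    have hxy : ⟪x, y⟫_ℂ = 0 := (Submodule.mem_orthogonal W y).mp hy _ hxW
    have h6 : ⟪J (J x), J y⟫_ℂ = 0 := by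
      rw [hinner, hJxy]
      simp
    have h7 : ⟪x, J y⟫_ℂ = 0 := by
      have hxe : x = (-(r : ℂ))⁻¹ • J (J x) := by
        rw [hsq, smul_smul, inv_mul_cancel₀ hrC, one_smul]
      rw [hxe, inner_smul_left, h6, mul_zero]
    have h8 : ⟪J x, J y⟫_ℂ = 0 := by
      rw [hinner, hxy]
      simp
    rw [Submodule.mem_orthogonal]
    intro u hu
    rw [hW] at hu
    obtain ⟨c, hc⟩ := (Submodule.mem_span_range_iff_exists_fun ℂ).mp hu
    rw [← hc]
    rw [Fin.sum_univ_two]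
    simp only [Matrix.cons_val_zero, Matrix.cons_val_one, Matrix.head_cons]
    rw [inner_add_left, inner_smul_left, inner_smul_left, h7, h8]
    simp
  have hsplit : 2 + Module.finrank ℂ Wᗮ = n := by
    rw [← hrank, ← hWrank]
    exact W.finrank_add_finrank_orthogonal
  have heven : Even (Module.finrank ℂ ↥Wᗮ) := by
    refine ih _ (by omega) Wᗮ (fun y => ⟨J y, hperp y y.2⟩) r rfl hr ?_ ?_ ?_ ?_
    · intro a b
      apply Subtype.ext
      simp [hadd]
    · intro c a
      apply Subtype.ext
      simp [hsmul]
    · intro a b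
      simpa [Submodule.coe_inner] using hinner (a : E) (b : E)
    · intro a
      apply Subtype.ext
      simp [hsq]
  obtain ⟨k, hk⟩ := heven
  exact ⟨k + 1, by omega⟩

set_option maxHeartbeats 1000000 in
/-- Let `U` be unitary, `P` a projection with `A = UPU* - P` compact, and
`τ` antiunitary with `τ² = -I`, `τUτ* = U*`, `τPτ* = P`. Then for every eigenvalue
`λ ∉ {-1, 0, 1}` of `A`, the eigenspace of `A` at `λ` has even dimension. -/
theorem kramers_degeneracy_of_eigenspaces
    {H : Type*} [NormedAddCommGroup H] [InnerProductSpace ℂ H] [CompleteSpace H]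
    (U : H →L[ℂ] H) (hU₁ : adjoint U * U = 1) (hU₂ : U * adjoint U = 1)
    (P : H →L[ℂ] H) (hP_idem : P * P = P) (hP_sa : IsSelfAdjoint P)
    (τ : H → H)
    (hτ_add : ∀ x y : H, τ (x + y) = τ x + τ y)
    (hτ_smul : ∀ (c : ℂ) (x : H), τ (c • x) = (starRingEnd ℂ c) • τ x)
    (hτ_bij : Function.Bijective τ)
    (hτ_inner : ∀ x y : H, ⟪τ x, τ y⟫_ℂ = starRingEnd ℂ ⟪x, y⟫_ℂ)
    (hτ_sq : ∀ x : H, τ (τ x) = -x)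
    (hτU : ∀ x : H, τ (U x) = adjoint U (τ x))
    (hτP : ∀ x : H, τ (P x) = P (τ x))
    (A : H →L[ℂ] H) (hA : A = U * P * adjoint U - P)
    (hA_compact : IsCompactOperator A)
    (lam : ℂ) (hlam : lam ∉ ({-1, 0, 1} : Set ℂ))
    (heig : Module.End.HasEigenvalue (↑A : H →ₗ[ℂ] H) lam) :
    Even (Module.finrank ℂ (Module.End.eigenspace (↑A : H →ₗ[ℂ] H) lam)) := by
  classical
  -- pointwise unitary facts
  have hU₁' : ∀ z : H, adjoint U (U z) = z := by
    intro z
    have := DFunLike.congr_fun hU₁ z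
    simpa using this
  have hU₂' : ∀ z : H, U (adjoint U z) = z := by
    intro z
    have := DFunLike.congr_fun hU₂ z
    simpa using this
  have hτ_neg : ∀ z : H, τ (-z) = -τ z := by
    intro z
    have := hτ_smul (-1) z
    simpa using this
  have hτ_sub : ∀ a b : H, τ (a - b) = τ a - τ b := by
    intro a b
    rw [sub_eq_add_neg, hτ_add, hτ_neg, ← sub_eq_add_neg]
  have hτU' : ∀ z : H, τ (adjoint U z) = U (τ z) := by
    intro z
    have h1 := hτU (adjoint U z)
    rw [hU₂' z] at h1
    have h2 := congrArg U h1
    rw [hU₂'] at h2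
    exact h2.symm
  -- the operator B
  set B : H →L[ℂ] H := 1 - P - U * P * adjoint U with hB
  have hQQ : (U * P * adjoint U) * (U * P * adjoint U) = U * P * adjoint U := by
    calc (U * P * adjoint U) * (U * P * adjoint U)
        = U * (P * ((adjoint U * U) * (P * adjoint U))) := by noncomm_ring
      _ = U * (P * (P * adjoint U)) := by rw [hU₁, one_mul]
      _ = U * ((P * P) * adjoint U) := by noncomm_ring
      _ = U * P * adjoint U := by rw [hP_idem]; noncomm_ring
  have hA2B2 : A * A + B * B = 1 := by
    have expand : A * A + B * B
        = 1 + (P * P - P) + (P * P - P)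
          + ((U * P * adjoint U) * (U * P * adjoint U) - U * P * adjoint U)
          + ((U * P * adjoint U) * (U * P * adjoint U) - U * P * adjoint U) := by
      rw [hA, hB]; noncomm_ring
    rw [expand, hP_idem, hQQ]
    simp
  have hABBA : A * B + B * A = 0 := by
    have expand : A * B + B * A
        = (U * P * adjoint U - (U * P * adjoint U) * (U * P * adjoint U))
          + (U * P * adjoint U - (U * P * adjoint U) * (U * P * adjoint U))
          + (P * P - P) + (P * P - P) := by
      rw [hA, hB]; noncomm_ring
    rw [expand, hP_idem, hQQ]
    simp
  -- self-adjointness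
  have hQ_sa : IsSelfAdjoint (U * P * adjoint U) := by
    rw [IsSelfAdjoint]
    simp only [← star_eq_adjoint, star_mul, star_star, hP_sa.star_eq, mul_assoc]
  have hA_sa : IsSelfAdjoint A := by
    rw [hA]
    exact hQ_sa.sub hP_sa
  have hB_sa : IsSelfAdjoint B := by
    rw [hB]
    exact ((show IsSelfAdjoint (1 : H →L[ℂ] H) from .one _).sub hP_sa).sub hQ_sa
  have hAsym := hA_sa.isSymmetric
  have hBsym := hB_sa.isSymmetric
  have hAsym' : ∀ a b : H, ⟪A a, b⟫_ℂ = ⟪a, A b⟫_ℂ := fun a b => hAsym a b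
  have hBsym' : ∀ a b : H, ⟪B a, b⟫_ℂ = ⟪a, B b⟫_ℂ := fun a b => hBsym a b
  -- lam is real
  have hconj : (starRingEnd ℂ) lam = lam := hAsym.conj_eigenvalue_eq_self heig
  have hlam_t : ((lam.re : ℝ) : ℂ) = lam := Complex.conj_eq_iff_re.mp hconj
  set t : ℝ := lam.re with ht
  -- pointwise operator identities
  have hA2B2' : ∀ z : H, A (A z) + B (B z) = z := by
    intro z
    have := DFunLike.congr_fun hA2B2 z
    simpa using this
  have hABpt : ∀ z : H, A (B z) = -(B (A z)) := by
    intro z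
    have := DFunLike.congr_fun hABBA z
    simp only [ContinuousLinearMap.add_apply, ContinuousLinearMap.mul_apply,
      ContinuousLinearMap.zero_apply] at this
    exact eq_neg_of_add_eq_zero_left this
  -- eigenvector gives |lam| < 1
  obtain ⟨x₀, hx₀⟩ := heig.exists_hasEigenvector
  have hx₀A : A x₀ = lam • x₀ := by
    have := hx₀.apply_eq_smul
    simpa using this
  have hx₀0 : x₀ ≠ 0 := hx₀.right
  have hUU : ∀ a b : H, ⟪U a, U b⟫_ℂ = ⟪a, b⟫_ℂ := by
    intro a b
    rw [← adjoint_inner_left, hU₁']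
  have hkey : (t ^ 2 * ‖x₀‖ ^ 2 + ‖B x₀‖ ^ 2 : ℝ) = ‖x₀‖ ^ 2 := by
    have h1 : ⟪x₀, A (A x₀)⟫_ℂ + ⟪x₀, B (B x₀)⟫_ℂ = ⟪x₀, x₀⟫_ℂ := by
      rw [← inner_add_right, hA2B2']
    have h2 : ⟪x₀, A (A x₀)⟫_ℂ = ((t ^ 2 : ℝ) : ℂ) * ⟪x₀, x₀⟫_ℂ := by
      rw [← hAsym' x₀ (A x₀), hx₀A, inner_smul_left, inner_smul_right, hconj, ← hlam_t]
      push_cast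
      ring
    have h3 : ⟪x₀, B (B x₀)⟫_ℂ = ⟪B x₀, B x₀⟫_ℂ := (hBsym' x₀ (B x₀)).symm
    rw [h2, h3, inner_self_eq_norm_sq_to_K, inner_self_eq_norm_sq_to_K] at h1
    have h1' : ((t ^ 2 * ‖x₀‖ ^ 2 + ‖B x₀‖ ^ 2 : ℝ) : ℂ) = ((‖x₀‖ ^ 2 : ℝ) : ℂ) := by
      push_cast
      push_cast at h1
      exact h1
    exact_mod_cast h1'
  set r : ℝ := 1 - t ^ 2 with hrdef
  have hr : 0 < r := by
    have h4 : t ^ 2 ≤ 1 := by nlinarith [hkey, sq_nonneg ‖B x₀‖, pow_pos (norm_pos_iff.mpr hx₀0) 2]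
    have h5 : t ^ 2 ≠ 1 := by
      intro h
      have h6 : (t - 1) * (t + 1) = 0 := by linear_combination h
      rcases mul_eq_zero.mp h6 with h7 | h7
      · apply hlam
        have : lam = 1 := by
          rw [← hlam_t, show t = (1 : ℝ) by linarith]
          norm_num
        simp [this]
      · apply hlam
        have : lam = -1 := by
          rw [← hlam_t, show t = (-1 : ℝ) by linarith]
          norm_num
        simp [this]
    have : 0 ≤ 1 - t ^ 2 := by linarith
    rcases this.lt_or_eq with h | h
    · exact h
    · exact absurd (by linarith : t ^ 2 = 1) h5
  have hrc : ((r : ℝ) : ℂ) = 1 - lam * lam := by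
    rw [hrdef, ← hlam_t]
    push_cast
    ring
  -- tau-tilde pointwise facts
  have hAap : ∀ z : H, A z = U (P (adjoint U z)) - P z := by
    intro z
    rw [hA]
    simp [ContinuousLinearMap.mul_apply]
  have hBap : ∀ z : H, B z = z - P z - U (P (adjoint U z)) := by
    intro z
    rw [hB]
    simp [ContinuousLinearMap.mul_apply]
  have hτQ : ∀ z : H, τ (U (P (adjoint U z))) = adjoint U (P (U (τ z))) := by
    intro z
    rw [hτU, hτP, hτU']
  have hAτ : ∀ z : H, A (U (τ z)) = -(U (τ (A z))) := by
    intro z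
    have h1 : A (U (τ z)) = U (P (τ z)) - P (U (τ z)) := by
      rw [hAap (U (τ z)), hU₁']
    have h2 : U (τ (A z)) = P (U (τ z)) - U (P (τ z)) := by
      rw [hAap z, hτ_sub, hτQ, hτP, map_sub, hU₂']
    rw [h1, h2, neg_sub]
  have hBτ : ∀ z : H, U (τ (B z)) = B (U (τ z)) := by
    intro z
    have h1 : B (U (τ z)) = U (τ z) - P (U (τ z)) - U (P (τ z)) := by
      rw [hBap (U (τ z)), hU₁']
    have h2 : U (τ (B z)) = U (τ z) - U (P (τ z)) - P (U (τ z)) := by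
      rw [hBap z, hτ_sub, hτ_sub, hτQ, hτP, map_sub, map_sub, hU₂']
    rw [h1, h2]
    abel
  have hττ : ∀ z : H, U (τ (U (τ z))) = -z := by
    intro z
    rw [hτU, hU₂', hτ_sq]
  -- membership characterization
  have hmem : ∀ z : H, z ∈ Module.End.eigenspace (↑A : H →ₗ[ℂ] H) lam ↔ A z = lam • z := by
    intro z
    rw [Module.End.mem_eigenspace_iff]
    simp
  -- J maps the eigenspace to itself
  have hAUτ : ∀ z : H, A z = lam • z → A (U (τ z)) = -(lam • U (τ z)) := by
    intro z hz
    rw [hAτ, hz, hτ_smul, map_smul, hconj]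
  have hJmem : ∀ z : H, A z = lam • z → A (B (U (τ z))) = lam • B (U (τ z)) := by
    intro z hz
    rw [hABpt, hAUτ z hz, map_neg, map_smul, neg_neg]
  have hBB : ∀ z : H, A z = lam • z → B (B z) = ((r : ℝ) : ℂ) • z := by
    intro z hz
    have h1 : B (B z) = z - A (A z) := by
      have := hA2B2' z
      exact eq_sub_of_add_eq' this
    rw [h1, hz, map_smul, hz, smul_smul, hrc, sub_smul, one_smul]
  have hsqJ : ∀ z : H, A z = lam • z →
      B (U (τ (B (U (τ z))))) = (-(((r : ℝ) : ℂ))) • z := by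
    intro z hz
    rw [hBτ (U (τ z)), hττ, map_neg, map_neg, hBB z hz, neg_smul]
  by_cases hfd : Module.Finite ℂ (Module.End.eigenspace (↑A : H →ₗ[ℂ] H) lam)
  · have hinnerJ : ∀ z w : H, A z = lam • z → A w = lam • w →
        ⟪B (U (τ z)), B (U (τ w))⟫_ℂ = ((r : ℝ) : ℂ) * (starRingEnd ℂ) ⟪z, w⟫_ℂ := by
      intro z w hz hw
      have hAAw : A (A (U (τ w))) = (lam * lam) • (U (τ w)) := by
        rw [hAτ w, map_neg, hAτ (A w), neg_neg, hw, map_smul, hw, smul_smul, hτ_smul,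
          map_smul, map_mul, hconj]
      have hBBw : B (B (U (τ w))) = ((r : ℝ) : ℂ) • (U (τ w)) := by
        have h1 : B (B (U (τ w))) = U (τ w) - A (A (U (τ w))) := eq_sub_of_add_eq' (hA2B2' _)
        rw [h1, hAAw, hrc, sub_smul, one_smul]
      calc ⟪B (U (τ z)), B (U (τ w))⟫_ℂ = ⟪U (τ z), B (B (U (τ w)))⟫_ℂ := hBsym' _ _
        _ = ((r : ℝ) : ℂ) * ⟪U (τ z), U (τ w)⟫_ℂ := by rw [hBBw, inner_smul_right]
        _ = ((r : ℝ) : ℂ) * (starRingEnd ℂ) ⟪z, w⟫_ℂ := by rw [hUU, hτ_inner]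
    have hfd' : FiniteDimensional ℂ (Module.End.eigenspace (↑A : H →ₗ[ℂ] H) lam) := hfd
    refine aux_even_quaternionic _ (Module.End.eigenspace (↑A : H →ₗ[ℂ] H) lam)
      (fun x => ⟨B (U (τ (x : H))), (hmem _).mpr (hJmem _ ((hmem _).mp x.2))⟩) r rfl hr
      ?_ ?_ ?_ ?_
    · intro a b
      apply Subtype.ext
      show B (U (τ ((a : H) + (b : H)))) = B (U (τ (a : H))) + B (U (τ (b : H)))
      rw [hτ_add, map_add, map_add]
    · intro c a
      apply Subtype.ext
      show B (U (τ (c • (a : H)))) = (starRingEnd ℂ c) • B (U (τ (a : H)))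
      rw [hτ_smul, map_smul, map_smul]
    · intro a b
      exact hinnerJ _ _ ((hmem _).mp a.2) ((hmem _).mp b.2)
    · intro a
      apply Subtype.ext
      show B (U (τ (B (U (τ (a : H)))))) = (-(((r : ℝ) : ℂ))) • (a : H)
      exact hsqJ _ ((hmem _).mp a.2)
  · rw [Module.finrank_of_not_finite hfd]
    exact Even.zero
end

section
/- Let P and Q be orthogonal projections and X = I - P - Q + 2PQ. Then X is normal, and X*X = XX* = (X + X*)/2 = B² where B = I - P - Q. -/
open ContinuousLinearMap

/-- For orthogonal projections `P, Q` and `X = I - P - Q + 2PQ`,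
the operator `X` is normal and `X*X = XX* = (X + X*)/2 = B²` with `B = I - P - Q`. -/
theorem X_normal
    {H : Type*} [NormedAddCommGroup H] [InnerProductSpace ℂ H] [CompleteSpace H]
    (P Q : H →L[ℂ] H)
    (hP_idem : P * P = P) (hP_sa : IsSelfAdjoint P)
    (hQ_idem : Q * Q = Q) (hQ_sa : IsSelfAdjoint Q)
    (X B : H →L[ℂ] H) (hX : X = 1 - P - Q + 2 • (P * Q)) (hB : B = 1 - P - Q) :
    adjoint X * X = X * adjoint X ∧
    adjoint X * X = ((2 : ℂ)⁻¹) • (X + adjoint X) ∧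
    adjoint X * X = B * B := by
  have hadj : adjoint X = 1 - P - Q + 2 • (Q * P) := by
    rw [hX]
    simp [← star_eq_adjoint, star_mul, hP_sa.star_eq, hQ_sa.star_eq, two_mul, mul_two]
  have key : ∀ Y Z : H →L[ℂ] H, Y * Y = Y → Z * Z = Z →
      (1 - Y - Z + 2 • (Z * Y)) * (1 - Y - Z + 2 • (Y * Z)) = 1 - Y - Z + Y * Z + Z * Y := by
    intro Y Z hY hZ
    have hY2 : ∀ x : H →L[ℂ] H, Y * (Y * x) = Y * x := fun x => by rw [← mul_assoc, hY]
    have hZ2 : ∀ x : H →L[ℂ] H, Z * (Z * x) = Z * x := fun x => by rw [← mul_assoc, hZ]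
    simp only [mul_sub, sub_mul, mul_add, add_mul, mul_one, one_mul, smul_mul_assoc,
      mul_smul_comm, mul_assoc, hY, hZ, hY2, hZ2, smul_smul]
    abel
  have key2 : ∀ Y Z : H →L[ℂ] H, Y * Y = Y → Z * Z = Z →
      (1 - Y - Z + 2 • (Y * Z)) * (1 - Y - Z + 2 • (Z * Y)) = 1 - Y - Z + Y * Z + Z * Y := by
    intro Y Z hY hZ
    have hY2 : ∀ x : H →L[ℂ] H, Y * (Y * x) = Y * x := fun x => by rw [← mul_assoc, hY]
    have hZ2 : ∀ x : H →L[ℂ] H, Z * (Z * x) = Z * x := fun x => by rw [← mul_assoc, hZ]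
    simp only [mul_sub, sub_mul, mul_add, add_mul, mul_one, one_mul, smul_mul_assoc,
      mul_smul_comm, mul_assoc, hY, hZ, hY2, hZ2, smul_smul]
    abel
  refine ⟨?_, ?_, ?_⟩
  · rw [hadj, hX, key P Q hP_idem hQ_idem, key2 P Q hP_idem hQ_idem]
  · rw [hadj, hX, key P Q hP_idem hQ_idem]
    have : (1 - P - Q + 2 • (P * Q) + (1 - P - Q + 2 • (Q * P)))
        = (2:ℂ) • (1 - P - Q + P * Q + Q * P) := by module
    rw [this, smul_smul]
    norm_num
  · rw [hadj, hX, key P Q hP_idem hQ_idem, hB]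
    simp only [mul_sub, sub_mul, mul_one, one_mul, hP_idem, hQ_idem]
    abel
end

section
/- Let P and Q be orthogonal projections, A = Q - P, B = I - P - Q, and X = I - P - Q + 2PQ. Then ker X = ker(A - I) ⊕ ker(A + I), i.e. the kernel of X equals the kernel of I - A². -/
/-- For orthogonal projections `P, Q`, `A = Q - P`, `B = I - P - Q`,
`X = I - P - Q + 2PQ`: the kernel of `X` is the (internal direct) sum of the eigenspaces
`ker(A - I)` and `ker(A + I)`, and equals the kernel of `I - A²`. -/
theorem ker_X_eq
    {H : Type*} [NormedAddCommGroup H] [InnerProductSpace ℂ H] [CompleteSpace H]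
    (P Q : H →L[ℂ] H)
    (hP_idem : P * P = P) (hP_sa : IsSelfAdjoint P)
    (hQ_idem : Q * Q = Q) (hQ_sa : IsSelfAdjoint Q)
    (A B X : H →L[ℂ] H) (hA : A = Q - P) (hB : B = 1 - P - Q)
    (hX : X = 1 - P - Q + 2 • (P * Q)) :
    LinearMap.ker (X : H →ₗ[ℂ] H) = LinearMap.ker ((A - 1 : H →L[ℂ] H) : H →ₗ[ℂ] H) ⊔
      LinearMap.ker ((A + 1 : H →L[ℂ] H) : H →ₗ[ℂ] H) ∧
    Disjoint (LinearMap.ker ((A - 1 : H →L[ℂ] H) : H →ₗ[ℂ] H))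
      (LinearMap.ker ((A + 1 : H →L[ℂ] H) : H →ₗ[ℂ] H)) ∧
    LinearMap.ker (X : H →ₗ[ℂ] H) = LinearMap.ker ((1 - A * A : H →L[ℂ] H) : H →ₗ[ℂ] H) := by
  -- star X
  have hstar : star X = 1 - P - Q + 2 • (Q * P) := by
    rw [hX]
    simp only [star_add, star_sub, star_one, star_smul, star_mul, hP_sa.star_eq, hQ_sa.star_eq, star_trivial]
  -- key algebraic identity: X* X = 1 - A²
  have key : star X * X = 1 - A * A := by
    rw [hstar, hX, hA]
    noncomm_ring
    simp only [← mul_assoc, hP_idem, hQ_idem]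
    noncomm_ring
  -- ker X = ker (X* X)
  have kerXX : LinearMap.ker (X : H →ₗ[ℂ] H) = LinearMap.ker ((1 - A * A : H →L[ℂ] H) : H →ₗ[ℂ] H) := by
    rw [← key]
    ext x
    simp only [LinearMap.mem_ker, ContinuousLinearMap.coe_coe, ContinuousLinearMap.mul_apply]
    constructor
    · intro h; rw [h, map_zero]
    · intro h
      have h2 : (inner ℂ (X x) (X x) : ℂ) = 0 := by
        rw [← ContinuousLinearMap.adjoint_inner_right, ← ContinuousLinearMap.star_eq_adjoint, h,
          inner_zero_right]
      simpa using inner_self_eq_zero.mp h2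
  -- eigenspace decomposition of ker (1 - A²)
  have hsup : LinearMap.ker ((1 - A * A : H →L[ℂ] H) : H →ₗ[ℂ] H) = LinearMap.ker ((A - 1 : H →L[ℂ] H) : H →ₗ[ℂ] H) ⊔ LinearMap.ker ((A + 1 : H →L[ℂ] H) : H →ₗ[ℂ] H) := by
    apply le_antisymm
    · intro x hx
      have hx' : A (A x) = x := by
        have h0 := LinearMap.mem_ker.mp hx
        have h1 : x - A (A x) = 0 := by simpa using h0
        exact (sub_eq_zero.mp h1).symm
      rw [Submodule.mem_sup]
      refine ⟨(2:ℂ)⁻¹ • (x + A x), ?_, (2:ℂ)⁻¹ • (x - A x), ?_, ?_⟩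
      · rw [LinearMap.mem_ker]
        simp only [ContinuousLinearMap.coe_coe, ContinuousLinearMap.sub_apply,
          ContinuousLinearMap.one_apply]
        rw [map_smul, map_add, hx']
        simp [add_comm]
      · rw [LinearMap.mem_ker]
        simp only [ContinuousLinearMap.coe_coe, ContinuousLinearMap.add_apply,
          ContinuousLinearMap.one_apply]
        rw [map_smul, map_sub, hx']
        simp [sub_add_cancel, ← smul_add]
      · rw [← smul_add]
        have : x + A x + (x - A x) = (2:ℂ) • x := by
          rw [two_smul]; abel
        rw [this, smul_smul, inv_mul_cancel₀ (by norm_num : (2:ℂ) ≠ 0), one_smul]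
    · apply sup_le
      · intro x hx
        have h1 : A x = x := by
          have := LinearMap.mem_ker.mp hx
          simpa [sub_eq_zero] using this
        rw [LinearMap.mem_ker]
        simp [h1]
      · intro x hx
        have h1 : A x = -x := by
          have := LinearMap.mem_ker.mp hx
          simpa [add_eq_zero_iff_eq_neg] using this
        rw [LinearMap.mem_ker]
        simp [h1]
  refine ⟨by rw [kerXX, hsup], ?_, kerXX⟩
  rw [Submodule.disjoint_def]
  intro x hx1 hx2
  have h1 : A x = x := by
    have := LinearMap.mem_ker.mp hx1
    simpa [sub_eq_zero] using this
  have h2 : A x = -x := by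
    have := LinearMap.mem_ker.mp hx2
    simpa [add_eq_zero_iff_eq_neg] using this
  have : (2:ℂ) • x = 0 := by
    rw [two_smul]
    nth_rewrite 1 [← h1]
    rw [h2]; abel
  simpa using (smul_eq_zero.mp this).resolve_left (by norm_num)
end

section
/- Let U be a unitary and P a projection with [U, P] compact. Then F = PUP + (I - P) is a Fredholm operator, and a vector ψ lies in ker F if and only if Uψ lies in ker(UPU* - P - I). -/
open ContinuousLinearMap Metric Set Filter Topology

set_option linter.unusedSectionVars false

section PUPAux
variable {H : Type*} [NormedAddCommGroup H] [InnerProductSpace ℂ H] [CompleteSpace H]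

local notation "⟪" x ", " y "⟫" => @inner ℂ _ _ x y

private lemma pup_aux_ker_findim (F G K : H →L[ℂ] H) (hK : IsCompactOperator ⇑K)
    (hGF : G * F = 1 + K) : FiniteDimensional ℂ (LinearMap.ker (F : H →ₗ[ℂ] H)) := by
  have hball : IsCompact (closure (⇑K '' Metric.closedBall 0 1)) :=
    hK.isCompact_closure_image_of_bounded (f := (K : H →ₗ[ℂ] H)) Metric.isBounded_closedBall
  set N := LinearMap.ker (F : H →ₗ[ℂ] H) with hN
  have hNclosed : IsClosed ((N : Submodule ℂ H) : Set H) := isClosed_ker F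
  have hsub : ((N : Submodule ℂ H) : Set H) ∩ Metric.closedBall 0 1 ⊆
      (fun x => -x) '' closure (⇑K '' Metric.closedBall 0 1) := by
    rintro x ⟨hxN, hx1⟩
    refine ⟨K x, subset_closure ⟨x, hx1, rfl⟩, ?_⟩
    have h0 : (G * F) x = (1 + K) x := by rw [hGF]
    have hx0 : F x = 0 := hxN
    simp only [mul_apply_eq_comp, add_apply, one_apply_eq_self, hx0, map_zero] at h0
    exact neg_eq_of_add_eq_zero_left h0.symm
  have hcpt : IsCompact (((N : Submodule ℂ H) : Set H) ∩ Metric.closedBall 0 1) :=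
    (hball.image continuous_neg).of_isClosed_subset (hNclosed.inter Metric.isClosed_closedBall) hsub
  have hball' : IsCompact (Metric.closedBall (0 : N) 1) := by
    rw [Subtype.isCompact_iff]
    convert hcpt using 1
    ext x
    constructor
    · rintro ⟨y, hy, rfl⟩
      refine ⟨y.2, ?_⟩
      simpa [Metric.mem_closedBall, dist_zero_right] using hy
    · rintro ⟨hx, hx1⟩
      refine ⟨⟨x, hx⟩, ?_, rfl⟩
      simpa [Metric.mem_closedBall, dist_zero_right] using hx1
  exact FiniteDimensional.of_isCompact_closedBall₀ ℂ one_pos hball'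

private lemma pup_aux_range_closed (F G K : H →L[ℂ] H) (hK : IsCompactOperator ⇑K)
    (hGF : G * F = 1 + K) : IsClosed ((LinearMap.range (F : H →ₗ[ℂ] H) : Submodule ℂ H) : Set H) := by
  set N := LinearMap.ker (F : H →ₗ[ℂ] H) with hN
  set M := Nᗮ with hM
  have hNclosed : IsClosed ((N : Submodule ℂ H) : Set H) := isClosed_ker F
  haveI : CompleteSpace N := hNclosed.completeSpace_coe
  have hMclosed : IsClosed ((M : Submodule ℂ H) : Set H) := N.isClosed_orthogonal
  haveI : CompleteSpace M := hMclosed.completeSpace_coe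
  have hbdd : ∃ c : ℝ, 0 < c ∧ ∀ x ∈ M, c * ‖x‖ ≤ ‖F x‖ := by
    by_contra hc
    push_neg at hc
    have hseq : ∀ n : ℕ, ∃ x : H, x ∈ M ∧ ‖x‖ = 1 ∧ ‖F x‖ < 1 / (n + 1) := by
      intro n
      obtain ⟨x, hxM, hx⟩ := hc (1 / (n + 1)) (by positivity)
      have hx0 : x ≠ 0 := by
        rintro rfl
        simp at hx
      have hnx : ‖x‖ ≠ 0 := norm_ne_zero_iff.2 hx0
      refine ⟨(‖x‖⁻¹ : ℂ) • x, M.smul_mem _ hxM, ?_, ?_⟩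
      · rw [norm_smul]
        simp [hnx]
      · rw [map_smul, norm_smul]
        simp only [norm_inv, Complex.norm_real]
        rw [norm_norm]
        calc ‖x‖⁻¹ * ‖F x‖ < ‖x‖⁻¹ * (1 / (n + 1) * ‖x‖) := by
              apply mul_lt_mul_of_pos_left hx (by positivity)
          _ = 1 / (n + 1) := by field_simp
    choose x hxM hx1 hxF using hseq
    have hFx : Tendsto (fun n => F (x n)) atTop (𝓝 0) := by
      rw [tendsto_zero_iff_norm_tendsto_zero]
      refine squeeze_zero (fun n => norm_nonneg _) (fun n => (hxF n).le) ?_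
      exact tendsto_one_div_add_atTop_nhds_zero_nat
    have hGFx : Tendsto (fun n => x n + K (x n)) atTop (𝓝 0) := by
      have h1 : Tendsto (fun n => G (F (x n))) atTop (𝓝 (G 0)) :=
        (G.continuous.tendsto 0).comp hFx
      rw [map_zero] at h1
      convert h1 using 2 with n
      have h0 : (G * F) (x n) = (1 + K) (x n) := by rw [hGF]
      simpa [mul_apply, add_apply, one_apply] using h0.symm
    have hball : IsCompact (closure (⇑K '' Metric.closedBall 0 1)) :=
      hK.isCompact_closure_image_of_bounded (f := (K : H →ₗ[ℂ] H)) Metric.isBounded_closedBall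
    have hmem : ∀ n, K (x n) ∈ closure (⇑K '' Metric.closedBall 0 1) := fun n =>
      subset_closure ⟨x n, by simp [Metric.mem_closedBall, hx1 n], rfl⟩
    obtain ⟨y, -, φ, hφ, hconv⟩ := hball.isSeqCompact hmem
    have hxconv : Tendsto (fun n => x (φ n)) atTop (𝓝 (-y)) := by
      have h2 := (hGFx.comp hφ.tendsto_atTop).sub hconv
      rw [zero_sub] at h2
      convert h2 using 2 with n
      simp [Function.comp]
    have hy1 : ‖(-y : H)‖ = 1 := by
      have h3 : Tendsto (fun n => ‖x (φ n)‖) atTop (𝓝 ‖(-y : H)‖) := hxconv.norm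
      have h4 : Tendsto (fun n => ‖x (φ n)‖) atTop (𝓝 1) := by
        simp [hx1]
      exact tendsto_nhds_unique h3 h4
    have hyM : -y ∈ M := hMclosed.mem_of_tendsto hxconv (Eventually.of_forall fun n => hxM _)
    have hyN : -y ∈ N := by
      have h5 : Tendsto (fun n => F (x (φ n))) atTop (𝓝 (F (-y))) :=
        (F.continuous.tendsto _).comp hxconv
      have h6 : Tendsto (fun n => F (x (φ n))) atTop (𝓝 0) := hFx.comp hφ.tendsto_atTop
      exact LinearMap.mem_ker.2 (tendsto_nhds_unique h5 h6)
    have h7 : (-y : H) = 0 := by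
      have h := (Submodule.mem_orthogonal N (-y)).1 hyM (-y) hyN
      exact inner_self_eq_zero.1 h
    rw [h7, norm_zero] at hy1
    exact zero_ne_one hy1
  obtain ⟨c, hc0, hc⟩ := hbdd
  set T : M →L[ℂ] H := F.comp M.subtypeL with hT
  have hanti : AntilipschitzWith (⟨c, hc0.le⟩ : NNReal)⁻¹ T := by
    apply ContinuousLinearMap.antilipschitz_of_bound
    intro m
    have h8 := hc m m.2
    have hTm : T m = F (m : H) := rfl
    rw [hTm]
    show ‖(m : H)‖ ≤ c⁻¹ * ‖F (m : H)‖
    exact (le_inv_mul_iff₀ hc0).2 h8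
  have hclosed := hanti.isClosed_range T.uniformContinuous
  have hrange : Set.range T = ((LinearMap.range (F : H →ₗ[ℂ] H) : Submodule ℂ H) : Set H) := by
    ext z
    constructor
    · rintro ⟨m, rfl⟩
      exact ⟨(m : H), rfl⟩
    · rintro ⟨v, rfl⟩
      have hv : v - (N.orthogonalProjectionOnto v : H) ∈ M :=
        N.sub_starProjection_mem_orthogonal v
      refine ⟨⟨_, hv⟩, ?_⟩
      have h9 : F ((N.orthogonalProjectionOnto v : H)) = 0 := (N.orthogonalProjectionOnto v).2
      show F (v - (N.orthogonalProjectionOnto v : H)) = F v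
      rw [map_sub, h9, sub_zero]
  rw [← hrange]
  exact hclosed

private lemma pup_aux_mul (U P : H →L[ℂ] H) (hU₁ : adjoint U * U = 1) (hP : P * P = P) :
    (P * adjoint U * P + (1 - P)) * (P * U * P + (1 - P)) =
      1 + -(P * adjoint U * (U * P - P * U) * P) := by
  have hPP : ∀ X : H →L[ℂ] H, P * (P * X) = P * X := fun X => by rw [← mul_assoc, hP]
  have hUU : ∀ X : H →L[ℂ] H, adjoint U * (U * X) = X := fun X => by
    rw [← mul_assoc, hU₁, one_mul]
  simp only [mul_add, add_mul, mul_sub, sub_mul, mul_one, one_mul, mul_assoc, hPP, hP, hUU, hU₁]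
  abel

private lemma pup_aux_orth (F : H →L[ℂ] H) :
    (LinearMap.range (F : H →ₗ[ℂ] H))ᗮ = LinearMap.ker ((ContinuousLinearMap.adjoint F : H →L[ℂ] H) : H →ₗ[ℂ] H) := by
  ext x
  rw [Submodule.mem_orthogonal, LinearMap.mem_ker]
  constructor
  · intro h
    show ContinuousLinearMap.adjoint F x = 0
    rw [← inner_self_eq_zero (𝕜 := ℂ) (x := ContinuousLinearMap.adjoint F x)]
    rw [adjoint_inner_left]
    rw [inner_eq_zero_symm]
    exact h _ ⟨ContinuousLinearMap.adjoint F x, rfl⟩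
  · rintro h u ⟨y, rfl⟩
    show ⟪F y, x⟫ = 0
    rw [← adjoint_inner_right, show ContinuousLinearMap.adjoint F x = 0 from h, inner_zero_right]

private lemma pup_aux_comm_adj (U P : H →L[ℂ] H) (hU₁ : adjoint U * U = 1)
    (hU₂ : U * adjoint U = 1) :
    adjoint U * P - P * adjoint U = -(adjoint U * (U * P - P * U) * adjoint U) := by
  have hUU : ∀ X : H →L[ℂ] H, adjoint U * (U * X) = X := fun X => by
    rw [← mul_assoc, hU₁, one_mul]
  simp only [mul_sub, sub_mul, mul_assoc, hUU, hU₂, mul_one]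
  abel

private lemma pup_aux_compact (A B C : H →L[ℂ] H) (hB : IsCompactOperator ⇑B) :
    IsCompactOperator ⇑(A * B * C) := by
  have heq : ⇑(A * B * C) = ⇑A ∘ ⇑B ∘ ⇑C := by
    ext v
    simp [mul_apply, Function.comp]
  rw [heq]
  exact (hB.comp_clm C).clm_comp A

end PUPAux

/-- Let `U` be a unitary and `P` a projection with compact commutator
`[U, P]`. Then `F = PUP + (I - P)` is Fredholm (finite-dimensional kernel and cokernel,
closed range), and `ψ ∈ ker F` if and only if `Uψ ∈ ker (UPU* - P - I)`. -/
theorem PUP_fredholm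
    {H : Type*} [NormedAddCommGroup H] [InnerProductSpace ℂ H] [CompleteSpace H]
    (U : H →L[ℂ] H) (hU₁ : adjoint U * U = 1) (hU₂ : U * adjoint U = 1)
    (P : H →L[ℂ] H) (hP_idem : P * P = P) (hP_sa : IsSelfAdjoint P)
    (h_comm : IsCompactOperator ⇑(U * P - P * U))
    (F : H →L[ℂ] H) (hF : F = P * U * P + (1 - P)) :
    FiniteDimensional ℂ (LinearMap.ker (F : H →ₗ[ℂ] H)) ∧
    FiniteDimensional ℂ (H ⧸ LinearMap.range (F : H →ₗ[ℂ] H)) ∧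
    IsClosed ((LinearMap.range (F : H →ₗ[ℂ] H) : Submodule ℂ H) : Set H) ∧
    (∀ ψ : H, F ψ = 0 ↔ (U * P * adjoint U - P - 1) (U ψ) = 0) := by
  -- the "parametrix" identity
  set G : H →L[ℂ] H := P * adjoint U * P + (1 - P) with hG
  set K₁ : H →L[ℂ] H := -(P * adjoint U * (U * P - P * U) * P) with hK₁
  have hGF : G * F = 1 + K₁ := by
    rw [hG, hF, hK₁]
    exact pup_aux_mul U P hU₁ hP_idem
  have hK₁c : IsCompactOperator ⇑K₁ := by
    rw [hK₁]
    have := (pup_aux_compact (P * adjoint U) (U * P - P * U) P h_comm).neg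
    exact this
  -- adjoint of F
  have hFadj : ContinuousLinearMap.adjoint F = G := by
    rw [hF, hG, ← star_eq_adjoint]
    simp only [star_add, star_sub, star_one, star_mul, hP_sa.star_eq, star_eq_adjoint]
    rw [← mul_assoc]
  -- parametrix for the adjoint
  set K₂ : H →L[ℂ] H := -(P * U * (adjoint U * P - P * adjoint U) * P) with hK₂
  have hGF' : F * G = 1 + K₂ := by
    have h := pup_aux_mul (adjoint U) P (by rw [adjoint_adjoint]; exact hU₂) hP_idem
    rw [adjoint_adjoint] at h
    rw [hF, hG, hK₂]
    exact h
  have hK₂c : IsCompactOperator ⇑K₂ := by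
    rw [hK₂]
    have hcadj : IsCompactOperator ⇑(adjoint U * P - P * adjoint U) := by
      rw [pup_aux_comm_adj U P hU₁ hU₂]
      have := (pup_aux_compact (adjoint U) (U * P - P * U) (adjoint U) h_comm).neg
      exact this
    have := (pup_aux_compact (P * U) (adjoint U * P - P * adjoint U) P hcadj).neg
    exact this
  -- the three Fredholm properties
  have hker : FiniteDimensional ℂ (LinearMap.ker (F : H →ₗ[ℂ] H)) := pup_aux_ker_findim F G K₁ hK₁c hGF
  have hclosed : IsClosed ((LinearMap.range (F : H →ₗ[ℂ] H) : Submodule ℂ H) : Set H) :=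
    pup_aux_range_closed F G K₁ hK₁c hGF
  have hkeradj : FiniteDimensional ℂ (LinearMap.ker ((ContinuousLinearMap.adjoint F : H →L[ℂ] H) : H →ₗ[ℂ] H)) := by
    refine pup_aux_ker_findim (ContinuousLinearMap.adjoint F) F K₂ hK₂c ?_
    rw [hFadj]
    exact hGF'
  have hcoker : FiniteDimensional ℂ (H ⧸ LinearMap.range (F : H →ₗ[ℂ] H)) := by
    haveI : CompleteSpace (LinearMap.range (F : H →ₗ[ℂ] H) : Submodule ℂ H) := hclosed.completeSpace_coe
    have hcompl : IsCompl (LinearMap.range (F : H →ₗ[ℂ] H) : Submodule ℂ H) (LinearMap.range (F : H →ₗ[ℂ] H))ᗮ :=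
      Submodule.isCompl_orthogonal_of_hasOrthogonalProjection
    have e := Submodule.quotientEquivOfIsCompl _ _ hcompl
    haveI : FiniteDimensional ℂ ((LinearMap.range (F : H →ₗ[ℂ] H))ᗮ : Submodule ℂ H) := by
      rw [pup_aux_orth F]
      exact hkeradj
    exact Module.Finite.equiv e.symm
  refine ⟨hker, hcoker, hclosed, ?_⟩
  -- pointwise kernel characterization
  intro ψ
  have hPP : ∀ v : H, P (P v) = P v := fun v => by
    have := congrArg (fun T : H →L[ℂ] H => T v) hP_idem
    simpa [mul_apply] using this
  have hadj : ∀ v : H, adjoint U (U v) = v := fun v => by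
    have := congrArg (fun T : H →L[ℂ] H => T v) hU₁
    simpa [mul_apply] using this
  have hFψ : F ψ = P (U (P ψ)) + (ψ - P ψ) := by
    rw [hF]
    simp [mul_apply, add_apply, sub_apply, one_apply]
  have hTψ : (U * P * adjoint U - P - 1) (U ψ) = U (P ψ) - P (U ψ) - U ψ := by
    simp [mul_apply, sub_apply, one_apply, hadj]
  rw [hFψ, hTψ]
  constructor
  · intro hψ
    have h1 : P (U (P ψ)) = 0 := by
      have h := congrArg (fun v => P v) hψ
      simpa [map_add, map_sub, hPP] using h
    have hb : ψ - P ψ = 0 := by rwa [h1, zero_add] at hψ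
    have hPψ : P ψ = ψ := (sub_eq_zero.1 hb).symm
    rw [hPψ] at h1 ⊢
    rw [h1]
    abel
  · intro hψ
    -- from U(Pψ) - P(Uψ) - Uψ = 0
    have hT' : U (P ψ) = P (U ψ) + U ψ := by
      have := hψ
      rw [sub_sub, sub_eq_zero] at this
      exact this
    set b : H := ψ - P ψ with hbdef
    have hUb : U b = -(P (U ψ)) := by
      have hb1 : U b = U ψ - U (P ψ) := by rw [hbdef, map_sub]
      rw [hb1, hT']
      abel
    have hPb : P b = 0 := by
      rw [hbdef, map_sub, hPP, sub_self]
    have hPUb : P (U b) = U b := by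
      rw [hUb, map_neg, hPP]
    -- inner ℂ product argument: ⟪b,b⟫ = -⟪b,b⟫
    have hPin : ∀ x y : H, (inner ℂ x (P y) : ℂ) = inner ℂ (P x) y := fun x y => by
      conv_rhs => rw [← hP_sa.adjoint_eq]
      rw [adjoint_inner_left]
    have hUin : ∀ x y : H, (inner ℂ (U x) (U y) : ℂ) = inner ℂ x y := fun x y => by
      rw [← adjoint_inner_left, hadj]
    have hbb : (inner ℂ b b : ℂ) = -inner ℂ b b := by
      calc (inner ℂ b b : ℂ) = inner ℂ (U b) (U b) := (hUin b b).symm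
        _ = inner ℂ (U b) (-(P (U ψ)) : H) := by rw [← hUb]
        _ = -inner ℂ (U b) (P (U ψ)) := by rw [inner_neg_right]
        _ = -inner ℂ (P (U b)) (U ψ) := by rw [hPin]
        _ = -inner ℂ (U b) (U ψ) := by rw [hPUb]
        _ = -inner ℂ b ψ := by rw [hUin]
        _ = -(inner ℂ b (P ψ + b) : ℂ) := by
              nth_rewrite 1 [show ψ = P ψ + b by rw [hbdef]; abel]
              rfl
        _ = -(inner ℂ b (P ψ) + inner ℂ b b) := by rw [inner_add_right]
        _ = -(inner ℂ (P b) ψ + inner ℂ b b) := by rw [hPin]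
        _ = -inner ℂ b b := by rw [hPb, inner_zero_left, zero_add]
    have hb0 : b = 0 := by
      have h2 : (inner ℂ b b : ℂ) + inner ℂ b b = 0 := by
        linear_combination hbb
      have h3 : (inner ℂ b b : ℂ) = 0 := by
        have := add_self_eq_zero.1 h2
        exact this
      exact inner_self_eq_zero.1 h3
    have hPψ : P ψ = ψ := by
      have := hb0
      rw [hbdef, sub_eq_zero] at this
      exact this.symm
    have hPUψ : P (U ψ) = 0 := by
      have := hUb
      rw [hb0, map_zero] at this
      exact neg_eq_zero.1 this.symm
    rw [hPψ, hPUψ, zero_add]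
    exact hb0
end
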